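/- Under the same hypotheses as for the acoustical metric ($M(v,v) = -1$, $0 < c \le 1$), the determinant of the induced spatial metric $g$ on $\Sigma_t$ is given by $\det g = \{c^2 - (c^2-1)(v^0)^2\}^3 \{c^{-6} + c^{-4}(c^{-2}-1)[(v^0)^2 - 1]\}$, and this quantity is strictly positive; moreover if additionally $c \ge c_0 > 0$ and $|v^i| \le V$ for all $i$, then $\det g$ is bounded above and below by positive constants depending only on $c_0$ and $V$. -/

import Mathlib

/-!
Up to the conformal factor `s = c² - (c² - 1)(v⁰)²`, the metric is `c⁻² I + (c⁻² - 1) u uᵀ` with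
`u = (v¹, v², v³)`, so the matrix determinant lemma gives the closed formula. On the unit
hyperboloid `|u|² = (v⁰)² - 1`, the rank-one factor collapses to `s / c⁶`, hence `det g = s⁴ / c⁶`;
for `0 < c ≤ 1` one has `1 ≤ s ≤ (v⁰)²`, which yields positivity and the uniform bounds.
-/

open Finset

/-- The induced spatial metric on `Σ_t`, as a `3 × 3` matrix:
`g_{ab} = {c⁻²δ_{ab} + (c⁻²-1)v^a v^b}{c² - (c²-1)(v⁰)²}`. -/
noncomputable def gMat (c : ℝ) (v : Fin 4 → ℝ) : Matrix (Fin 3) (Fin 3) ℝ :=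
  Matrix.of fun a b =>
    ((c ^ 2)⁻¹ * (if a = b then 1 else 0) + ((c ^ 2)⁻¹ - 1) * v a.succ * v b.succ) *
      (c ^ 2 - (c ^ 2 - 1) * (v 0) ^ 2)

theorem Matrix.det_smul_one_add_vecMulVec {n K : Type*} [Fintype n] [DecidableEq n] [Field K]
    {a : K} (ha : a ≠ 0) (u w : n → K) :
    (a • (1 : Matrix n n K) + Matrix.vecMulVec u w).det =
      a ^ Fintype.card n * (1 + a⁻¹ * (w ⬝ᵥ u)) := by
  have hfactor : a • (1 : Matrix n n K) + Matrix.vecMulVec u w =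
      a • (1 + Matrix.vecMulVec (a⁻¹ • u) w) := by
    rw [smul_add, Matrix.smul_vecMulVec, smul_inv_smul₀ ha]
  rw [hfactor, Matrix.det_smul, Matrix.vecMulVec_eq Unit,
    Matrix.det_one_add_replicateCol_mul_replicateRow, dotProduct_smul, smul_eq_mul]

theorem Finset.sum_sq_le_card_mul_sq {ι : Type*} [Fintype ι] {u : ι → ℝ} {V : ℝ}
    (hu : ∀ i, |u i| ≤ V) : ∑ i, u i ^ 2 ≤ Fintype.card ι * V ^ 2 := by
  simpa using Finset.sum_le_card_nsmul univ (fun i => u i ^ 2) (V ^ 2) fun i _ =>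
    sq_abs (u i) ▸ pow_le_pow_left₀ (abs_nonneg _) (hu i) 2

theorem gMat_eq_smul (c : ℝ) (v : Fin 4 → ℝ) :
    gMat c v = (c ^ 2 - (c ^ 2 - 1) * v 0 ^ 2) •
      ((c ^ 2)⁻¹ • 1 + Matrix.vecMulVec (((c ^ 2)⁻¹ - 1) • Fin.tail v) (Fin.tail v)) := by
  ext a b
  simp only [gMat, Matrix.of_apply, Matrix.smul_apply, Matrix.add_apply, Matrix.one_apply,
    Matrix.smul_vecMulVec, Matrix.vecMulVec_apply, Fin.tail, smul_eq_mul, mul_ite, mul_one, mul_zero]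
  ring

theorem gMat_det {c : ℝ} (hc : c ≠ 0) (v : Fin 4 → ℝ) :
    (gMat c v).det = (c ^ 2 - (c ^ 2 - 1) * v 0 ^ 2) ^ 3 *
      ((c ^ 6)⁻¹ + (c ^ 4)⁻¹ * ((c ^ 2)⁻¹ - 1) * ∑ i : Fin 3, v i.succ ^ 2) := by
  rw [gMat_eq_smul, Matrix.det_smul,
    Matrix.det_smul_one_add_vecMulVec (inv_ne_zero (pow_ne_zero 2 hc)), dotProduct_smul]
  simp only [Fintype.card_fin, dotProduct, Fin.tail, smul_eq_mul, sq]
  field_simp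

theorem spatial_sum_sq_eq {v : Fin 4 → ℝ} (hv : -(v 0) ^ 2 + ∑ i : Fin 3, (v i.succ) ^ 2 = -1) :
    ∑ i : Fin 3, v i.succ ^ 2 = v 0 ^ 2 - 1 := by
  linarith

theorem gMat_det_eq_pow_four_div {c : ℝ} (hc : c ≠ 0) {v : Fin 4 → ℝ}
    (hv : -(v 0) ^ 2 + ∑ i : Fin 3, (v i.succ) ^ 2 = -1) :
    (gMat c v).det = (c ^ 2 - (c ^ 2 - 1) * v 0 ^ 2) ^ 4 / c ^ 6 := by
  rw [gMat_det hc, spatial_sum_sq_eq hv]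
  field_simp
  ring

theorem one_le_gMat_det_and_le {c : ℝ} (hc0 : 0 < c) (hc1 : c ≤ 1) {v : Fin 4 → ℝ}
    (hv : -(v 0) ^ 2 + ∑ i : Fin 3, (v i.succ) ^ 2 = -1) :
    1 ≤ (gMat c v).det ∧ (gMat c v).det ≤ (v 0 ^ 2) ^ 4 / c ^ 6 := by
  have hw : 1 ≤ v 0 ^ 2 := by
    have : 0 ≤ ∑ i : Fin 3, v i.succ ^ 2 := by positivity
    linarith [spatial_sum_sq_eq hv]
  have hc2 : c ^ 2 ≤ 1 := pow_le_one₀ hc0.le hc1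
  have hs1 : 1 ≤ c ^ 2 - (c ^ 2 - 1) * v 0 ^ 2 := by nlinarith
  have hsw : c ^ 2 - (c ^ 2 - 1) * v 0 ^ 2 ≤ v 0 ^ 2 := by nlinarith
  rw [gMat_det_eq_pow_four_div hc0.ne' hv]
  constructor
  · rw [le_div_iff₀ (by positivity), one_mul]
    exact (pow_le_one₀ hc0.le hc1).trans (one_le_pow₀ hs1)
  · gcongr

/-- explicit formula and positivity for `det g`, together with uniform
upper and lower bounds depending only on a lower bound `c₀` for the sound speed and an
upper bound `V` for the spatial velocity components. -/
theorem stmt3 :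
    (∀ (c : ℝ) (v : Fin 4 → ℝ), 0 < c → c ≤ 1 →
      (-(v 0) ^ 2 + ∑ i : Fin 3, (v i.succ) ^ 2 = -1) →
      (gMat c v).det =
        (c ^ 2 - (c ^ 2 - 1) * (v 0) ^ 2) ^ 3 *
          ((c ^ 6)⁻¹ + (c ^ 4)⁻¹ * ((c ^ 2)⁻¹ - 1) * ((v 0) ^ 2 - 1)) ∧
      0 < (gMat c v).det) ∧
    (∀ c₀ V : ℝ, 0 < c₀ →
      ∃ C₁ C₂ : ℝ, 0 < C₁ ∧ 0 < C₂ ∧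
        ∀ (c : ℝ) (v : Fin 4 → ℝ), c₀ ≤ c → c ≤ 1 →
          (-(v 0) ^ 2 + ∑ i : Fin 3, (v i.succ) ^ 2 = -1) →
          (∀ i : Fin 3, |v i.succ| ≤ V) →
          C₁ ≤ (gMat c v).det ∧ (gMat c v).det ≤ C₂) := by
  refine ⟨fun c v hc0 hc1 hv => ⟨?_, ?_⟩, fun c₀ V hc₀ => ?_⟩
  · rw [gMat_det hc0.ne', spatial_sum_sq_eq hv]
  · exact one_pos.trans_le (one_le_gMat_det_and_le hc0 hc1 hv).1
  refine ⟨1, (1 + 3 * V ^ 2) ^ 4 / c₀ ^ 6, one_pos, by positivity, fun c v hc₀c hc1 hv hV => ?_⟩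
  obtain ⟨hlow, hupp⟩ := one_le_gMat_det_and_le (hc₀.trans_le hc₀c) hc1 hv
  have hw : v 0 ^ 2 ≤ 1 + 3 * V ^ 2 := by
    have hsum := Finset.sum_sq_le_card_mul_sq hV
    rw [spatial_sum_sq_eq hv, Fintype.card_fin, Nat.cast_ofNat] at hsum
    linarith
  refine ⟨hlow, hupp.trans ?_⟩
  gcongr
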